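/- Suppose Δ is simply-laced, the highest root θ is a fundamental weight, and α̂ is the unique simple root not orthogonal to θ. Let ŵ = w_{θ−α̂, α̂} be the minimal-length element taking θ − α̂ to α̂. Then ŵ fixes θ, ŵ(α̂) = θ − α̂, and ŵ is an involution: ŵ² = 1. -/

import Mathlib

open scoped RealInnerProductSpace

/-- Data of a crystallographic root system in a real inner product space `V`,
with simple roots indexed by a finite type `ι`. -/
structure RSD (ι V : Type*) [Fintype ι] [NormedAddCommGroup V]
    [InnerProductSpace ℝ V] where
  /-- The simple roots. -/
  sroot : ι → V
  /-- The set of roots. -/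
  Δ : Set V
  finite : Δ.Finite
  zero_not_mem : (0 : V) ∉ Δ
  sroot_mem : ∀ i, sroot i ∈ Δ
  sroot_indep : LinearIndependent ℝ sroot
  neg_mem : ∀ a ∈ Δ, -a ∈ Δ
  /-- Crystallographic condition. -/
  crys : ∀ a ∈ Δ, ∀ b ∈ Δ, ∃ n : ℤ, 2 * ⟪a, b⟫ / ⟪a, a⟫ = (n : ℝ)
  /-- The reflection associated with a vector (only specified on roots). -/
  reflect : V → (V ≃ₗ[ℝ] V)
  reflect_apply : ∀ a ∈ Δ, ∀ v : V,
    reflect a v = v - (2 * ⟪a, v⟫ / ⟪a, a⟫) • a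
  reflect_root_mem : ∀ a ∈ Δ, ∀ b ∈ Δ, reflect a b ∈ Δ
  /-- Every root is a nonnegative or nonpositive integral combination of simple roots. -/
  decomp : ∀ a ∈ Δ, (∃ c : ι → ℕ, a = ∑ i, (c i : ℝ) • sroot i) ∨
      (∃ c : ι → ℕ, a = -∑ i, (c i : ℝ) • sroot i)
  /-- Irreducibility. -/
  irred : ∀ S T : Set V, S ∪ T = Δ → (∀ a ∈ S, ∀ b ∈ T, ⟪a, b⟫ = 0) →
      S = ∅ ∨ T = ∅

namespace RSD

variable {ι V : Type*} [Fintype ι] [NormedAddCommGroup V] [InnerProductSpace ℝ V]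
  (R : RSD ι V)

/-- The set of positive roots. -/
def pos : Set V := {a ∈ R.Δ | ∃ c : ι → ℕ, a = ∑ i, (c i : ℝ) • R.sroot i}

/-- `R.le μ γ` means `μ ≼ γ`, i.e. `γ - μ` is a nonnegative integral combination
of simple roots. -/
def le (μ γ : V) : Prop := ∃ c : ι → ℕ, γ - μ = ∑ i, (c i : ℝ) • R.sroot i

/-- The Weyl group, generated by the simple reflections. -/
def W : Subgroup (V ≃ₗ[ℝ] V) :=
  Subgroup.closure (Set.range fun i => R.reflect (R.sroot i))

/-- The inversion set `N(w) = {γ ∈ Δ⁺ ∣ w γ ∈ -Δ⁺}`. -/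
def N (w : V ≃ₗ[ℝ] V) : Set V := {γ ∈ R.pos | -(w γ) ∈ R.pos}

/-- The length of `w`: minimal length of an expression of `w` as a product of
simple reflections. -/
noncomputable def len (w : V ≃ₗ[ℝ] V) : ℕ :=
  sInf {n | ∃ l : List ι, l.length = n ∧
    (l.map fun i => R.reflect (R.sroot i)).prod = w}

/-- The coroot `a∨ = 2a/(a,a)`. -/
@[nolint unusedArguments]
noncomputable def coroot (_R : RSD ι V) (a : V) : V := (2 / ⟪a, a⟫) • a

/-- `ρ`, the half-sum of the positive roots. -/
noncomputable def rho : V :=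
  (2⁻¹ : ℝ) • ∑ a ∈ (R.finite.subset (fun a ha => ha.1 : R.pos ⊆ R.Δ)).toFinset, a

/-- `R.HtIs γ n` : the height of `γ` is `n`. -/
def HtIs (γ : V) (n : ℕ) : Prop :=
  ∃ c : ι → ℕ, γ = ∑ i, (c i : ℝ) • R.sroot i ∧ ∑ i, c i = n

/-- A long root: a root of maximal squared length. -/
def IsLong (γ : V) : Prop := γ ∈ R.Δ ∧ ∀ b ∈ R.Δ, ⟪b, b⟫ ≤ ⟪γ, γ⟫

/-- The highest root. -/
def IsHighest (θ : V) : Prop := θ ∈ R.pos ∧ ∀ γ ∈ R.pos, R.le γ θ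

/-- Simply-laced: all roots have the same length. -/
def SimplyLaced : Prop := ∀ a ∈ R.Δ, ∀ b ∈ R.Δ, ⟪a, a⟫ = ⟪b, b⟫

/-- A minimal inversion complete set. -/
def IsMICS (F : Set (V ≃ₗ[ℝ] V)) : Prop :=
  (∀ w ∈ F, w ∈ R.W) ∧ (⋃ w ∈ F, R.N w) = R.pos ∧
    ∀ F' ⊂ F, (⋃ w ∈ F', R.N w) ≠ R.pos

end RSD

/-!
Let `J` be the simple roots other than `α̂ = α_{i₀}` and let `ht_J` (`htExcept i₀`) count only
`J`-coordinates. In the simply-laced case a simple reflection moves a positive root by at most one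
simple root, so it lowers `ht_J` by at most one, and only through a `J`-letter; hence every word
carrying a root `μ` of `α̂`-level one to `α̂` has length at least `ht_J μ`, and subtracting suitable
`J`-simple roots shows that this bound is attained. In a word of exactly this length the last letter
`s_j` must satisfy `j ∈ J` and `s_j μ = μ - α_j`; so such words use only `J`-letters (and fix `θ`),
and any two of them have the same product: if their last letters `i ≠ j` differ, then `α_i ⊥ α_j`
and both words reroute through `μ - α_i - α_j`. For `μ = θ - α̂` this makes `ŵ` fix `θ`, hence
`ŵ α̂ = θ - α̂`, and `ŵ⁻¹` is another shortest word carrying `θ - α̂` to `α̂`, so `ŵ⁻¹ = ŵ`.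
-/

instance FiniteDimensional.span_range {K V ι : Type*} [DivisionRing K] [AddCommGroup V]
    [Module K V] [Finite ι] (v : ι → V) : FiniteDimensional K (Submodule.span K (Set.range v)) :=
  FiniteDimensional.span_of_finite K (Set.finite_range v)

namespace RSD

variable {ι V : Type*} [Fintype ι] [NormedAddCommGroup V] [InnerProductSpace ℝ V]
  {R : RSD ι V} {a b x : V}

section Reflection

lemma inner_self_pos (ha : a ∈ R.Δ) : 0 < ⟪a, a⟫ :=
  real_inner_self_pos.2 fun h => R.zero_not_mem (h ▸ ha)

lemma inner_coroot (a b : V) : ⟪b, R.coroot a⟫ = 2 * ⟪a, b⟫ / ⟪a, a⟫ := by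
  rw [coroot, real_inner_smul_right, real_inner_comm a b]
  ring

lemma reflect_eq (ha : a ∈ R.Δ) (x : V) : R.reflect a x = x - ⟪x, R.coroot a⟫ • a := by
  rw [R.reflect_apply a ha, inner_coroot]

lemma inner_coroot_self (ha : a ∈ R.Δ) : ⟪a, R.coroot a⟫ = 2 := by
  rw [inner_coroot, mul_div_assoc, div_self (inner_self_pos ha).ne', mul_one]

lemma reflect_of_inner_coroot_eq_one (ha : a ∈ R.Δ) (h : ⟪x, R.coroot a⟫ = 1) :
    R.reflect a x = x - a := by
  rw [reflect_eq ha, h, one_smul]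

lemma reflect_of_inner_eq_zero (ha : a ∈ R.Δ) (h : ⟪a, x⟫ = 0) : R.reflect a x = x := by
  rw [R.reflect_apply a ha, h]
  simp

lemma reflect_mul_self (ha : a ∈ R.Δ) : R.reflect a * R.reflect a = 1 := by
  ext x
  rw [LinearEquiv.mul_apply, reflect_eq ha, reflect_eq ha x, inner_sub_left,
    real_inner_smul_left, inner_coroot_self ha]
  change _ = x
  module

lemma reflect_mul_comm (ha : a ∈ R.Δ) (hb : b ∈ R.Δ) (h : ⟪a, b⟫ = 0) :
    R.reflect a * R.reflect b = R.reflect b * R.reflect a := by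
  have hab : ⟪b, R.coroot a⟫ = 0 := by rw [inner_coroot, h]; simp
  have hba : ⟪a, R.coroot b⟫ = 0 := by rw [inner_coroot, real_inner_comm, h]; simp
  ext x
  simp only [LinearEquiv.mul_apply, reflect_eq ha, reflect_eq hb, inner_sub_left,
    real_inner_smul_left, hab, hba]
  module

lemma inner_coroot_trichotomy (hsl : R.SimplyLaced) (ha : a ∈ R.Δ) (hb : b ∈ R.Δ) (hab : b ≠ a)
    (hab' : b ≠ -a) :
    ⟪b, R.coroot a⟫ = -1 ∨ ⟪b, R.coroot a⟫ = 0 ∨ ⟪b, R.coroot a⟫ = 1 := by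
  obtain ⟨n, hn⟩ := R.crys a ha b hb
  have ht := inner_self_pos ha
  have hnorm := hsl b hb a ha
  have hsub : 0 < ⟪b - a, b - a⟫ := real_inner_self_pos.2 (sub_ne_zero.2 hab)
  have hadd : 0 < ⟪b + a, b + a⟫ :=
    real_inner_self_pos.2 fun h => hab' (eq_neg_of_add_eq_zero_left h)
  simp only [inner_sub_left, inner_sub_right, inner_add_left, inner_add_right,
    real_inner_comm a b, hnorm] at hsub hadd
  have hval : 2 * ⟪a, b⟫ = n * ⟪a, a⟫ := by rw [← hn]; field_simp
  have h1 : (n : ℝ) < 2 := by nlinarith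
  have h2 : (-2 : ℝ) < n := by nlinarith
  have : n = -1 ∨ n = 0 ∨ n = 1 := by
    have : n < 2 := by exact_mod_cast h1
    have : -2 < n := by exact_mod_cast h2
    omega
  rw [inner_coroot, hn]
  rcases this with rfl | rfl | rfl <;> norm_num

end Reflection

section Words

noncomputable def word (R : RSD ι V) (l : List ι) : V ≃ₗ[ℝ] V :=
  (l.map fun i => R.reflect (R.sroot i)).prod

lemma word_cons (i : ι) (l : List ι) : R.word (i :: l) = R.reflect (R.sroot i) * R.word l := by
  simp [word]

lemma word_append_singleton (l : List ι) (i : ι) :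
    R.word (l ++ [i]) = R.word l * R.reflect (R.sroot i) := by
  simp [word]

lemma word_reverse (l : List ι) : R.word l.reverse = (R.word l)⁻¹ := by
  induction l with
  | nil => simp [word]
  | cons i l ih =>
    rw [List.reverse_cons, word_append_singleton, ih, word_cons, mul_inv_rev,
      inv_eq_of_mul_eq_one_left (reflect_mul_self (R.sroot_mem i))]

lemma word_mem_W (l : List ι) : R.word l ∈ R.W :=
  Subgroup.list_prod_mem _ fun _ hx => by
    obtain ⟨i, -, rfl⟩ := List.mem_map.1 hx
    exact Subgroup.subset_closure ⟨i, rfl⟩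

lemma exists_word_eq {w : V ≃ₗ[ℝ] V} (hw : w ∈ R.W) : ∃ l, R.word l = w := by
  induction hw using Subgroup.closure_induction with
  | mem x hx =>
    obtain ⟨i, rfl⟩ := hx
    exact ⟨[i], by simp [word]⟩
  | one => exact ⟨[], rfl⟩
  | mul x y _ _ hx hy =>
    obtain ⟨l₁, rfl⟩ := hx
    obtain ⟨l₂, rfl⟩ := hy
    exact ⟨l₁ ++ l₂, by simp [word]⟩
  | inv x _ hx =>
    obtain ⟨l, rfl⟩ := hx
    exact ⟨l.reverse, word_reverse l⟩

lemma exists_word_length_eq_len {w : V ≃ₗ[ℝ] V} (hw : w ∈ R.W) :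
    ∃ l, R.word l = w ∧ l.length = R.len w := by
  obtain ⟨l, hl⟩ := exists_word_eq hw
  have hne : {n | ∃ l : List ι, l.length = n ∧ R.word l = w}.Nonempty := ⟨l.length, l, rfl, hl⟩
  obtain ⟨l', hlen, hl'⟩ := Nat.sInf_mem hne
  exact ⟨l', hl', hlen⟩

lemma len_word_le (l : List ι) : R.len (R.word l) ≤ l.length :=
  Nat.sInf_le ⟨l, rfl, rfl⟩

lemma word_apply_of_forall_inner_eq_zero {l : List ι} (h : ∀ j ∈ l, ⟪R.sroot j, x⟫ = 0) :
    R.word l x = x := by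
  induction l with
  | nil => rfl
  | cons i l ih =>
    rw [word_cons, LinearEquiv.mul_apply, ih fun j hj => h j (List.mem_cons_of_mem i hj),
      reflect_of_inner_eq_zero (R.sroot_mem i) (h i List.mem_cons_self)]

end Words

section Coordinates

variable (R) in
noncomputable def coord : V →ₗ[ℝ] ι → ℝ :=
  (Module.Basis.span R.sroot_indep).equivFun.toLinearMap ∘ₗ
    (Submodule.span ℝ (Set.range R.sroot)).orthogonalProjectionOnto.toLinearMap

lemma coord_sroot [DecidableEq ι] (i : ι) : R.coord (R.sroot i) = Pi.single i 1 := by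
  have h : R.sroot i = (Module.Basis.span R.sroot_indep i : V) := by
    rw [Module.Basis.span_apply]
  ext j
  rw [coord, LinearMap.comp_apply, ContinuousLinearMap.coe_coe, h,
    Submodule.orthogonalProjectionOnto_mem_subspace_eq_self]
  simp [Finsupp.single_apply, Pi.single_apply, eq_comm]

lemma coord_sum (c : ι → ℝ) : R.coord (∑ i, c i • R.sroot i) = c := by
  classical
  ext j
  simp [coord_sroot, Pi.single_apply]

lemma mem_span_of_mem (ha : a ∈ R.Δ) : a ∈ Submodule.span ℝ (Set.range R.sroot) := by
  rcases R.decomp a ha with ⟨c, rfl⟩ | ⟨c, rfl⟩ <;>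
  [skip; apply Submodule.neg_mem] <;>
  exact Submodule.sum_mem _ fun i _ => Submodule.smul_mem _ _ (Submodule.subset_span ⟨i, rfl⟩)

lemma sum_coord_smul (ha : a ∈ R.Δ) : ∑ i, R.coord a i • R.sroot i = a := by
  obtain ⟨c, rfl⟩ := (Submodule.mem_span_range_iff_exists_fun ℝ).1 (mem_span_of_mem ha)
  rw [coord_sum]

lemma coord_nonneg (ha : a ∈ R.pos) (i : ι) : 0 ≤ R.coord a i := by
  obtain ⟨-, c, rfl⟩ := ha
  rw [coord_sum]
  positivity

lemma mem_pos_of_coord_pos (ha : a ∈ R.Δ) {i : ι} (h : 0 < R.coord a i) : a ∈ R.pos := by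
  rcases R.decomp a ha with hc | ⟨c, rfl⟩
  · exact ⟨ha, hc⟩
  · rw [map_neg, coord_sum] at h
    simp only [Pi.neg_apply, Left.neg_pos_iff] at h
    exact absurd h (not_lt.2 (Nat.cast_nonneg _))

lemma ne_neg_sroot (ha : a ∈ R.pos) (i : ι) : a ≠ -R.sroot i := by
  classical
  rintro rfl
  have := coord_nonneg ha i
  norm_num [coord_sroot] at this

lemma sroot_mem_pos (i : ι) : R.sroot i ∈ R.pos := by
  classical
  exact mem_pos_of_coord_pos (R.sroot_mem i) (i := i) (by simp [coord_sroot])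

lemma eq_sroot_or_eq_neg_sroot (hsl : R.SimplyLaced) (ha : a ∈ R.Δ) {i : ι}
    (h : ∀ j ≠ i, R.coord a j = 0) : a = R.sroot i ∨ a = -R.sroot i := by
  have hai : a = R.coord a i • R.sroot i := by
    conv_lhs => rw [← sum_coord_smul ha]
    exact Finset.sum_eq_single i (fun j _ hj => by rw [h j hj, zero_smul]) (by simp)
  have hnorm := hsl a ha _ (R.sroot_mem i)
  rw [hai, real_inner_smul_left, real_inner_smul_right, ← mul_assoc] at hnorm
  have hc : R.coord a i * R.coord a i = 1 :=
    mul_right_cancel₀ (inner_self_pos (R.sroot_mem i)).ne' (hnorm.trans (one_mul _).symm)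
  rcases mul_self_eq_one_iff.1 hc with hc | hc <;> rw [hai, hc] <;> simp

lemma coord_reflect_sroot [DecidableEq ι] (i : ι) (x : V) :
    R.coord (R.reflect (R.sroot i) x) = R.coord x - ⟪x, R.coroot (R.sroot i)⟫ • Pi.single i 1 := by
  rw [reflect_eq (R.sroot_mem i), map_sub, map_smul, coord_sroot]

lemma reflect_sroot_mem_pos (hsl : R.SimplyLaced) (ha : a ∈ R.pos) {i : ι} (hai : a ≠ R.sroot i) :
    R.reflect (R.sroot i) a ∈ R.pos := by
  classical
  by_cases h : ∃ j ≠ i, 0 < R.coord a j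
  · obtain ⟨j, hji, hj⟩ := h
    refine mem_pos_of_coord_pos (R.reflect_root_mem _ (R.sroot_mem i) a ha.1) (i := j) ?_
    simpa [coord_reflect_sroot, Pi.single_apply, hji] using hj
  · push Not at h
    rcases eq_sroot_or_eq_neg_sroot hsl ha.1 fun j hj => (h j hj).antisymm (coord_nonneg ha j)
      with h | h
    · exact absurd h hai
    · exact absurd h (ne_neg_sroot ha i)

lemma inner_coroot_sroot_nonpos (hsl : R.SimplyLaced) {i j : ι} (hij : i ≠ j) :
    ⟪R.sroot i, R.coroot (R.sroot j)⟫ ≤ 0 := by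
  classical
  have hne : R.sroot i ≠ R.sroot j := R.sroot_indep.injective.ne hij
  have hne' : R.sroot i ≠ -R.sroot j := ne_neg_sroot (sroot_mem_pos i) j
  rcases inner_coroot_trichotomy hsl (R.sroot_mem j) (R.sroot_mem i) hne hne' with h | h | h
  · rw [h]; norm_num
  · rw [h]
  · -- then `α_i - α_j` would be a root with coefficients of both signs
    have hroot := R.reflect_root_mem _ (R.sroot_mem j) _ (R.sroot_mem i)
    have hpos := mem_pos_of_coord_pos hroot (i := i) (by
      simp [coord_reflect_sroot, coord_sroot, h, hij])
    have := coord_nonneg hpos j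
    norm_num [coord_reflect_sroot, coord_sroot, h, hij.symm] at this

lemma mem_pos_of_coord_eq_one (ha : a ∈ R.Δ) {i : ι} (h : R.coord a i = 1) : a ∈ R.pos :=
  mem_pos_of_coord_pos ha (h ▸ one_pos)

lemma sum_coord_mul_inner_coroot (hsl : R.SimplyLaced) (ha : a ∈ R.Δ) :
    ∑ j, R.coord a j * ⟪a, R.coroot (R.sroot j)⟫ = 2 := by
  have ht := inner_self_pos ha
  calc ∑ j, R.coord a j * ⟪a, R.coroot (R.sroot j)⟫
      = 2 / ⟪a, a⟫ * ⟪∑ j, R.coord a j • R.sroot j, a⟫ := by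
        rw [sum_inner, Finset.mul_sum]
        refine Finset.sum_congr rfl fun j _ => ?_
        rw [inner_coroot, hsl _ (R.sroot_mem j) a ha, real_inner_smul_left]
        ring
    _ = 2 := by
        rw [sum_coord_smul ha]
        field_simp

end Coordinates

section Height

variable (R) in
noncomputable def htExcept (i₀ : ι) : V →ₗ[ℝ] ℝ :=
  ∑ j, LinearMap.proj j ∘ₗ R.coord - LinearMap.proj i₀ ∘ₗ R.coord

variable {i₀ i : ι}

lemma htExcept_apply (x : V) : R.htExcept i₀ x = ∑ j, R.coord x j - R.coord x i₀ := by
  simp [htExcept]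

lemma htExcept_sroot [DecidableEq ι] (i₀ i : ι) :
    R.htExcept i₀ (R.sroot i) = if i = i₀ then 0 else 1 := by
  rw [htExcept_apply, coord_sroot, Finset.sum_pi_single']
  split_ifs <;> simp_all

lemma htExcept_nonneg (ha : a ∈ R.pos) : 0 ≤ R.htExcept i₀ a := by
  rw [htExcept_apply, sub_nonneg]
  exact Finset.single_le_sum (fun j _ => coord_nonneg ha j) (Finset.mem_univ i₀)

lemma htExcept_reflect_sroot (x : V) :
    R.htExcept i₀ (R.reflect (R.sroot i) x) =
      R.htExcept i₀ x - ⟪x, R.coroot (R.sroot i)⟫ * R.htExcept i₀ (R.sroot i) := by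
  rw [reflect_eq (R.sroot_mem i), map_sub, map_smul, smul_eq_mul]

lemma htExcept_le_htExcept_reflect_add_one (hsl : R.SimplyLaced) (ha : a ∈ R.pos)
    (hai : a ≠ R.sroot i) :
    R.htExcept i₀ a ≤ R.htExcept i₀ (R.reflect (R.sroot i) a) + 1 := by
  classical
  rw [htExcept_reflect_sroot, htExcept_sroot]
  rcases inner_coroot_trichotomy hsl (R.sroot_mem i) ha.1 hai (ne_neg_sroot ha i) with h | h | h <;>
    rw [h] <;> split_ifs <;> linarith

theorem htExcept_le_length (hsl : R.SimplyLaced) (i₀ : ι) (l : List ι) :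
    ∀ {x : V}, x ∈ R.pos → R.word l x = R.sroot i₀ → R.htExcept i₀ x ≤ l.length := by
  classical
  induction l using List.reverseRecOn with
  | nil =>
    rintro x - rfl
    simp [htExcept_sroot]
  | append_singleton l i ih =>
    intro x hx hlx
    rw [word_append_singleton, LinearEquiv.mul_apply] at hlx
    rw [List.length_append, List.length_singleton, Nat.cast_add, Nat.cast_one]
    by_cases hxi : x = R.sroot i
    · have : R.htExcept i₀ (R.sroot i) ≤ 1 := by
        rw [htExcept_sroot]
        split_ifs <;> norm_num
      have := l.length.cast_nonneg (α := ℝ)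
      subst hxi
      linarith
    · linarith [htExcept_le_htExcept_reflect_add_one (i₀ := i₀) hsl hx hxi,
        ih (reflect_sroot_mem_pos hsl hx hxi) hlx]

end Height

section LevelOne

variable {i₀ i j : ι} {μ : V}

lemma word_append_singleton_apply (hc : ⟪x, R.coroot (R.sroot i)⟫ = 1) (l : List ι) :
    R.word (l ++ [i]) x = R.word l (x - R.sroot i) := by
  rw [word_append_singleton, LinearEquiv.mul_apply,
    reflect_of_inner_coroot_eq_one (R.sroot_mem i) hc]

lemma sub_sroot_of_inner_coroot_eq_one (hμ : μ ∈ R.Δ) (h1 : R.coord μ i₀ = 1) (hi : i ≠ i₀)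
    (hc : ⟪μ, R.coroot (R.sroot i)⟫ = 1) :
    μ - R.sroot i ∈ R.Δ ∧ R.coord (μ - R.sroot i) i₀ = 1 ∧
      R.htExcept i₀ (μ - R.sroot i) = R.htExcept i₀ μ - 1 := by
  classical
  refine ⟨?_, ?_, ?_⟩
  · rw [← reflect_of_inner_coroot_eq_one (R.sroot_mem i) hc]
    exact R.reflect_root_mem _ (R.sroot_mem i) μ hμ
  · simp [coord_sroot, h1, hi.symm]
  · rw [map_sub, htExcept_sroot, if_neg hi]

lemma ne_and_inner_coroot_eq_one_of_word_append (hsl : R.SimplyLaced) (hμ : μ ∈ R.Δ)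
    (h1 : R.coord μ i₀ = 1) {l : List ι} (happ : R.word (l ++ [i]) μ = R.sroot i₀)
    (hlen : R.htExcept i₀ μ = l.length + 1) :
    i ≠ i₀ ∧ ⟪μ, R.coroot (R.sroot i)⟫ = 1 := by
  classical
  have hpos := mem_pos_of_coord_eq_one hμ h1
  have hμi : μ ≠ R.sroot i := by
    rintro rfl
    obtain rfl : i = i₀ := by
      by_contra h
      simp [coord_sroot, Ne.symm h] at h1
    rw [htExcept_sroot, if_pos rfl] at hlen
    linarith [l.length.cast_nonneg (α := ℝ)]
  rw [word_append_singleton, LinearEquiv.mul_apply] at happ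
  have hle := htExcept_le_length hsl i₀ l (reflect_sroot_mem_pos hsl hpos hμi) happ
  rw [htExcept_reflect_sroot, htExcept_sroot, hlen] at hle
  rcases inner_coroot_trichotomy hsl (R.sroot_mem i) hμ hμi (ne_neg_sroot hpos i) with h | h | h <;>
    rw [h] at hle <;> split_ifs at hle with hi <;> first | exact ⟨hi, h⟩ | linarith

lemma exists_inner_coroot_eq_one (hsl : R.SimplyLaced) (hμ : μ ∈ R.Δ) (h1 : R.coord μ i₀ = 1)
    (hne : μ ≠ R.sroot i₀) : ∃ j ≠ i₀, ⟪μ, R.coroot (R.sroot j)⟫ = 1 := by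
  classical
  have hpos := mem_pos_of_coord_eq_one hμ h1
  have hsum := sum_coord_mul_inner_coroot hsl hμ
  rw [← Finset.add_sum_erase _ _ (Finset.mem_univ i₀), h1, one_mul] at hsum
  have h0 : ⟪μ, R.coroot (R.sroot i₀)⟫ ≤ 1 := by
    rcases inner_coroot_trichotomy hsl (R.sroot_mem i₀) hμ hne (ne_neg_sroot hpos i₀)
      with h | h | h <;> rw [h] <;> norm_num
  obtain ⟨j, hj, hprod⟩ := Finset.exists_lt_of_sum_lt (f := fun _ => (0 : ℝ))
    (g := fun j => R.coord μ j * ⟪μ, R.coroot (R.sroot j)⟫) (s := Finset.univ.erase i₀)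
    (by rw [Finset.sum_const_zero]; linarith)
  have hji : j ≠ i₀ := Finset.ne_of_mem_erase hj
  have hc : 0 < ⟪μ, R.coroot (R.sroot j)⟫ := pos_of_mul_pos_right hprod (coord_nonneg hpos j)
  have hμj : μ ≠ R.sroot j := by
    rintro rfl
    simp [coord_sroot, hji] at h1
  refine ⟨j, hji, ?_⟩
  rcases inner_coroot_trichotomy hsl (R.sroot_mem j) hμ hμj (ne_neg_sroot hpos j) with h | h | h <;>
    rw [h] at hc ⊢ <;> norm_num at hc

theorem exists_word_apply_eq_sroot (hsl : R.SimplyLaced) (hμ : μ ∈ R.Δ) (h1 : R.coord μ i₀ = 1) :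
    ∃ l : List ι, (l.length : ℝ) = R.htExcept i₀ μ ∧ R.word l μ = R.sroot i₀ := by
  classical
  obtain ⟨n, hn⟩ := exists_nat_ge (R.htExcept i₀ μ)
  induction n generalizing μ with
  | zero =>
    obtain rfl : μ = R.sroot i₀ := by
      by_contra hne
      obtain ⟨j, hj, hc⟩ := exists_inner_coroot_eq_one hsl hμ h1 hne
      obtain ⟨hμ', h1', hht⟩ := sub_sroot_of_inner_coroot_eq_one hμ h1 hj hc
      have := htExcept_nonneg (i₀ := i₀) (mem_pos_of_coord_eq_one hμ' h1')
      push_cast at hn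
      linarith
    exact ⟨[], by simp [htExcept_sroot], rfl⟩
  | succ n ih =>
    by_cases hne : μ = R.sroot i₀
    · subst hne
      exact ⟨[], by simp [htExcept_sroot], rfl⟩
    obtain ⟨j, hj, hc⟩ := exists_inner_coroot_eq_one hsl hμ h1 hne
    obtain ⟨hμ', h1', hht⟩ := sub_sroot_of_inner_coroot_eq_one hμ h1 hj hc
    obtain ⟨l, hlen, hl⟩ := ih hμ' h1' (by push_cast at hn; linarith)
    refine ⟨l ++ [j], ?_, by rw [word_append_singleton_apply hc, hl]⟩
    rw [List.length_append, List.length_singleton, Nat.cast_add, hlen, hht]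
    ring

theorem notMem_of_htExcept_eq_length (hsl : R.SimplyLaced) (l : List ι) :
    ∀ {μ : V}, μ ∈ R.Δ → R.coord μ i₀ = 1 → R.word l μ = R.sroot i₀ →
      R.htExcept i₀ μ = l.length → i₀ ∉ l := by
  induction l using List.reverseRecOn with
  | nil => simp
  | append_singleton l i ih =>
    intro μ hμ h1 happ hlen
    rw [List.length_append, List.length_singleton, Nat.cast_add, Nat.cast_one] at hlen
    obtain ⟨hi, hc⟩ := ne_and_inner_coroot_eq_one_of_word_append hsl hμ h1 happ hlen
    obtain ⟨hμ', h1', hht⟩ := sub_sroot_of_inner_coroot_eq_one hμ h1 hi hc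
    rw [word_append_singleton_apply hc] at happ
    have := ih hμ' h1' happ (by rw [hht, hlen]; ring)
    simp [this, hi.symm]

lemma inner_sroot_eq_zero_of_inner_coroot_eq_one (hsl : R.SimplyLaced) (hμ : μ ∈ R.Δ)
    (h1 : R.coord μ i₀ = 1) (hi : i ≠ i₀) (hj : j ≠ i₀) (hij : i ≠ j)
    (hci : ⟪μ, R.coroot (R.sroot i)⟫ = 1) (hcj : ⟪μ, R.coroot (R.sroot j)⟫ = 1) :
    ⟪R.sroot i, R.sroot j⟫ = 0 := by
  classical
  obtain ⟨hμ', h1', -⟩ := sub_sroot_of_inner_coroot_eq_one hμ h1 hi hci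
  have hne : μ - R.sroot i ≠ R.sroot j := by
    intro h
    simp [h, coord_sroot, hj] at h1'
  have hne' := ne_neg_sroot (mem_pos_of_coord_eq_one hμ' h1') j
  have hnp := inner_coroot_sroot_nonpos hsl hij
  have hzero : ⟪R.sroot i, R.coroot (R.sroot j)⟫ = 0 := by
    rcases inner_coroot_trichotomy hsl (R.sroot_mem j) hμ' hne hne' with h | h | h <;>
      rw [inner_sub_left, hcj] at h <;> linarith
  rw [inner_coroot, div_eq_zero_iff, mul_eq_zero] at hzero
  rcases hzero with (h | h) | h
  · norm_num at h
  · rw [real_inner_comm, h]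
  · exact absurd h (inner_self_pos (R.sroot_mem j)).ne'

lemma exists_word_of_inner_coroot_eq_one_of_ne (hsl : R.SimplyLaced) (hμ : μ ∈ R.Δ)
    (h1 : R.coord μ i₀ = 1) (hi : i ≠ i₀) (hj : j ≠ i₀) (hij : i ≠ j)
    (hci : ⟪μ, R.coroot (R.sroot i)⟫ = 1) (hcj : ⟪μ, R.coroot (R.sroot j)⟫ = 1) :
    ∃ m : List ι, (m.length : ℝ) + 1 = R.htExcept i₀ μ - 1 ∧
      R.word (m ++ [j]) (μ - R.sroot i) = R.sroot i₀ ∧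
      R.word (m ++ [i]) (μ - R.sroot j) = R.sroot i₀ ∧
      R.word (m ++ [j]) * R.reflect (R.sroot i) = R.word (m ++ [i]) * R.reflect (R.sroot j) := by
  have horth := inner_sroot_eq_zero_of_inner_coroot_eq_one hsl hμ h1 hi hj hij hci hcj
  have horth' : ⟪R.sroot j, R.sroot i⟫ = 0 := by rw [real_inner_comm, horth]
  have hcj' : ⟪μ - R.sroot i, R.coroot (R.sroot j)⟫ = 1 := by
    rw [inner_sub_left, hcj, inner_coroot, horth']
    simp
  have hci' : ⟪μ - R.sroot j, R.coroot (R.sroot i)⟫ = 1 := by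
    rw [inner_sub_left, hci, inner_coroot, horth]
    simp
  obtain ⟨hμi, h1i, hti⟩ := sub_sroot_of_inner_coroot_eq_one hμ h1 hi hci
  obtain ⟨hν, h1ν, htν⟩ := sub_sroot_of_inner_coroot_eq_one hμi h1i hj hcj'
  obtain ⟨m, hm, hmν⟩ := exists_word_apply_eq_sroot hsl hν h1ν
  refine ⟨m, by rw [hm, htν, hti]; ring, by rw [word_append_singleton_apply hcj', hmν],
    by rw [word_append_singleton_apply hci', sub_right_comm, hmν], ?_⟩
  rw [word_append_singleton, word_append_singleton, mul_assoc, mul_assoc,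
    reflect_mul_comm (R.sroot_mem j) (R.sroot_mem i) horth']

theorem word_eq_of_htExcept_eq_length (hsl : R.SimplyLaced) (n : ℕ) :
    ∀ {μ : V} {l l' : List ι}, μ ∈ R.Δ → R.coord μ i₀ = 1 → R.htExcept i₀ μ = n →
      l.length = n → l'.length = n → R.word l μ = R.sroot i₀ → R.word l' μ = R.sroot i₀ →
      R.word l = R.word l' := by
  induction n with
  | zero =>
    intro μ l l' _ _ _ hl hl' _ _
    rw [List.length_eq_zero_iff.1 hl, List.length_eq_zero_iff.1 hl']
  | succ n ih =>
    intro μ l l' hμ h1 hn hl hl' happ happ'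
    obtain ⟨l, i, rfl⟩ := l.eq_nil_or_concat'.resolve_left (by rintro rfl; simp at hl)
    obtain ⟨l', j, rfl⟩ := l'.eq_nil_or_concat'.resolve_left (by rintro rfl; simp at hl')
    simp only [List.length_append, List.length_singleton, Nat.add_right_cancel_iff] at hl hl'
    obtain ⟨hi, hci⟩ :=
      ne_and_inner_coroot_eq_one_of_word_append hsl hμ h1 happ (by rw [hn, hl]; push_cast; ring)
    obtain ⟨hj, hcj⟩ :=
      ne_and_inner_coroot_eq_one_of_word_append hsl hμ h1 happ' (by rw [hn, hl']; push_cast; ring)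
    obtain ⟨hμi, h1i, hti⟩ := sub_sroot_of_inner_coroot_eq_one hμ h1 hi hci
    obtain ⟨hμj, h1j, htj⟩ := sub_sroot_of_inner_coroot_eq_one hμ h1 hj hcj
    rw [hn] at hti htj
    push_cast at hti htj
    rw [add_sub_cancel_right] at hti htj
    rw [word_append_singleton_apply hci] at happ
    rw [word_append_singleton_apply hcj] at happ'
    rw [word_append_singleton, word_append_singleton]
    rcases eq_or_ne i j with rfl | hij
    · rw [ih hμi h1i hti hl hl' happ happ']
    -- the last letters commute, and both words factor through a shortest word for `μ - α_i - α_j`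
    obtain ⟨m, hm, hmi, hmj, hcomm⟩ :=
      exists_word_of_inner_coroot_eq_one_of_ne hsl hμ h1 hi hj hij hci hcj
    have hmlen : ∀ k, (m ++ [k]).length = n := fun k => by
      rw [List.length_append, List.length_singleton]
      exact_mod_cast (by rw [hm, hn]; push_cast; ring : (m.length : ℝ) + 1 = n)
    rw [ih hμi h1i hti hl (hmlen j) happ hmi, ih hμj h1j htj hl' (hmlen i) happ' hmj, hcomm]

lemma coord_eq_two_of_fundamental (hsl : R.SimplyLaced) {θ : V} (hθ : θ ∈ R.Δ)
    (h1 : ⟪θ, R.coroot (R.sroot i₀)⟫ = 1) (h0 : ∀ j ≠ i₀, ⟪θ, R.sroot j⟫ = 0) :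
    R.coord θ i₀ = 2 := by
  have hsum := sum_coord_mul_inner_coroot hsl hθ
  rwa [Finset.sum_eq_single i₀ (fun j _ hj => by rw [coroot, real_inner_smul_right, h0 j hj,
    mul_zero, mul_zero]) (by simp), h1, mul_one] at hsum

theorem len_eq_htExcept (hsl : R.SimplyLaced) (hμ : μ ∈ R.Δ) (h1 : R.coord μ i₀ = 1)
    {w : V ≃ₗ[ℝ] V} (hw : w ∈ R.W) (hwμ : w μ = R.sroot i₀)
    (hmin : ∀ w' ∈ R.W, w' μ = R.sroot i₀ → R.len w ≤ R.len w') :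
    (R.len w : ℝ) = R.htExcept i₀ μ := by
  obtain ⟨l, rfl, hlen⟩ := exists_word_length_eq_len hw
  obtain ⟨l₀, hl₀, hl₀μ⟩ := exists_word_apply_eq_sroot hsl hμ h1
  refine le_antisymm ?_ (hlen ▸ htExcept_le_length hsl i₀ l (mem_pos_of_coord_eq_one hμ h1) hwμ)
  rw [← hl₀]
  exact_mod_cast (hmin _ (word_mem_W l₀) hl₀μ).trans (len_word_le l₀)

end LevelOne

end RSD

/-- Suppose `Δ` is simply-laced, `θ` is a fundamental weight and
`α̂ = sroot ih` is the unique simple root not orthogonal to `θ`. If `ŵ` is the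
minimal-length element taking `θ - α̂` to `α̂`, then `ŵ θ = θ`, `ŵ α̂ = θ - α̂`,
and `ŵ² = 1`. -/
theorem hat_w_is_involution
    {ι V : Type*} [Fintype ι] [NormedAddCommGroup V] [InnerProductSpace ℝ V]
    (R : RSD ι V) (hsl : R.SimplyLaced) (θ : V) (hθ : R.IsHighest θ) (ih : ι)
    (hfund1 : ⟪θ, R.coroot (R.sroot ih)⟫ = 1)
    (hfund0 : ∀ j : ι, j ≠ ih → ⟪θ, R.sroot j⟫ = 0)
    (w : V ≃ₗ[ℝ] V) (hw : w ∈ R.W) (hwapp : w (θ - R.sroot ih) = R.sroot ih)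
    (hmin : ∀ w' ∈ R.W, w' (θ - R.sroot ih) = R.sroot ih → R.len w ≤ R.len w') :
    w θ = θ ∧ w (R.sroot ih) = θ - R.sroot ih ∧ w * w = 1 := by
  classical
  have hβ : θ - R.sroot ih ∈ R.Δ := by
    rw [← RSD.reflect_of_inner_coroot_eq_one (R.sroot_mem ih) hfund1]
    exact R.reflect_root_mem _ (R.sroot_mem ih) θ hθ.1.1
  have hβ1 : R.coord (θ - R.sroot ih) ih = 1 := by
    rw [map_sub, Pi.sub_apply, RSD.coord_eq_two_of_fundamental hsl hθ.1.1 hfund1 hfund0,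
      RSD.coord_sroot, Pi.single_eq_same]
    norm_num
  have hlen := RSD.len_eq_htExcept hsl hβ hβ1 hw hwapp hmin
  obtain ⟨l, rfl, hl⟩ := RSD.exists_word_length_eq_len hw
  rw [← hl] at hlen
  have hθfix : R.word l θ = θ := RSD.word_apply_of_forall_inner_eq_zero fun j hj => by
    rw [real_inner_comm]
    exact hfund0 j (ne_of_mem_of_not_mem hj
      (RSD.notMem_of_htExcept_eq_length hsl l hβ hβ1 hwapp hlen.symm))
  have hα : R.word l (R.sroot ih) = θ - R.sroot ih := by
    simpa [hθfix, hwapp] using map_sub (R.word l) θ (θ - R.sroot ih)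
  refine ⟨hθfix, hα, ?_⟩
  have hinv : R.word l.reverse = R.word l :=
    RSD.word_eq_of_htExcept_eq_length hsl l.length hβ hβ1 hlen.symm l.length_reverse rfl
      (by rw [RSD.word_reverse, ← hα]; simp) hwapp
  rw [RSD.word_reverse] at hinv
  rw [mul_eq_one_iff_eq_inv, hinv]
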